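/- For every integer n ≥ 1, every 0 < α < 1, and every measurable set E ⊆ ℝⁿ, |{x ∈ ℝⁿ : M₁⋯M_n χ_E(x) > α}| ≤ (1 + 4·(1−α)^{1/n}/(1 − (1−α)^{1/n}))^n · |E|. -/

import Mathlib

/-!
Each `M_j` acts on one line at a time, so by Fubini it suffices to bound the one-dimensional
maximal function: `|{M χ_A > 1 - β}| ≤ (1 + β) / (1 - β) · |A|`. A point outside `A` at which some
interval has density `> γ = 1 - β` in `A` sees density `> γ` on the part of that interval to its
right or to its left. By Riesz's rising sun lemma, applied to `x ↦ |A ∩ (0, x]| - γ x`, the points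
of the first kind lie in disjoint intervals on each of which `A` has density `≥ γ`; so they cover
at most `β / (1 - β) · |A|` outside `A`, and reflection gives the same for the second kind.

To iterate, note that if `0 ≤ g ≤ 1` has average `> 1 - β ε` on a segment, then `{g > 1 - ε}` has
density `> 1 - β` there. Hence `{M_j g > 1 - β^(k+1)} ⊆ {M_j χ_{g > 1 - β^k} > 1 - β}`, and
induction over the `n` directions with `β = (1 - α)^(1/n)` gives the factor `((1 + β) / (1 - β))^n`.
-/

open MeasureTheory Set Filter
open scoped ENNReal

/-- The directional maximal operator `M_j` on `ℝⁿ`, averaging over segments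
in the `j`-th coordinate direction. -/
noncomputable def dirMax {n : ℕ} (j : Fin n) (f : (Fin n → ℝ) → ℝ≥0∞)
    (x : Fin n → ℝ) : ℝ≥0∞ :=
  ⨆ (s : ℝ) (t : ℝ) (_ : s < x j) (_ : x j < t),
    (∫⁻ u in Set.Ioo s t, f (Function.update x j u)) / ENNReal.ofReal (t - s)

/-- The iterated maximal operator `M₁ M₂ ⋯ M_n`. -/
noncomputable def iterMax (n : ℕ) (f : (Fin n → ℝ) → ℝ≥0∞) : (Fin n → ℝ) → ℝ≥0∞ :=
  (List.finRange n).foldr (fun j g => dirMax j g) f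

/-- The shadow set of Riesz's rising sun lemma. -/
def shadow (F : ℝ → ℝ) : Set ℝ := {x | ∃ t, x < t ∧ F x < F t}

section RisingSun

variable {F : ℝ → ℝ}

theorem notMem_shadow_iff {b : ℝ} : b ∉ shadow F ↔ ∀ t, b < t → F t ≤ F b := by
  simp [shadow]

theorem isOpen_shadow (hF : Continuous F) : IsOpen (shadow F) := by
  have : shadow F = ⋃ t, Iio t ∩ F ⁻¹' Iio (F t) := by ext x; simp [shadow]
  rw [this]
  exact isOpen_iUnion fun t => isOpen_Iio.inter (isOpen_Iio.preimage hF)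

theorem le_of_Ico_subset_shadow (hF : Continuous F) {y b : ℝ} (hyb : y ≤ b)
    (hsub : Ico y b ⊆ shadow F) (hb : b ∉ shadow F) : F y ≤ F b := by
  obtain ⟨m, hm, hmax⟩ :=
    isCompact_Icc.exists_isMaxOn (nonempty_Icc.2 hyb) hF.continuousOn
  refine (hmax (left_mem_Icc.2 hyb)).trans (not_lt.1 fun hbm => ?_)
  obtain ⟨t, hmt, hFt⟩ :=
    hsub ⟨hm.1, hm.2.lt_of_ne (by rintro rfl; exact lt_irrefl _ hbm)⟩
  rcases le_or_gt t b with htb | hbt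
  · exact (hmax ⟨hm.1.trans hmt.le, htb⟩).not_gt hFt
  · exact ((notMem_shadow_iff.1 hb t hbt).trans hbm.le).not_gt hFt

theorem le_of_Ioo_subset_shadow (hF : Continuous F) {a b : ℝ} (hab : a < b)
    (hsub : Ioo a b ⊆ shadow F) (hb : b ∉ shadow F) : F a ≤ F b := by
  refine le_of_tendsto (hF.continuousAt.tendsto.mono_left (nhdsWithin_le_nhds (s := Ioi a))) ?_
  filter_upwards [Ioo_mem_nhdsGT hab] with y hy
  exact le_of_Ico_subset_shadow hF hy.2.le
    (fun z hz => hsub ⟨hy.1.trans_le hz.1, hz.2⟩) hb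

theorem exists_ge_notMem_shadow (hF : Continuous F) (htop : Tendsto F atTop atBot) (x : ℝ) :
    ∃ z, x ≤ z ∧ z ∉ shadow F := by
  obtain ⟨T, hT⟩ := eventually_atTop.1 (htop.eventually (eventually_lt_atBot (F x)))
  have hxT : x ≤ max x T := le_max_left x T
  obtain ⟨m, hm, hmax⟩ :=
    isCompact_Icc.exists_isMaxOn (nonempty_Icc.2 hxT) hF.continuousOn
  refine ⟨m, hm.1, notMem_shadow_iff.2 fun t hmt => ?_⟩
  rcases le_or_gt t (max x T) with h | h
  · exact hmax ⟨hm.1.trans hmt.le, h⟩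
  · exact ((hT t (le_of_max_le_right h.le)).trans_le (hmax (left_mem_Icc.2 hxT))).le

theorem exists_Ioo_subset_shadow (hF : Continuous F) (htop : Tendsto F atTop atBot)
    (hbot : Tendsto F atBot atTop) {x : ℝ} (hx : x ∈ shadow F) :
    ∃ a b, x ∈ Ioo a b ∧ Ioo a b ⊆ shadow F ∧ a ∉ shadow F ∧ b ∉ shadow F := by
  have hclosed := (isOpen_shadow hF).isClosed_compl
  obtain ⟨b, hxb, hb, hxbV⟩ : ∃ b, x ≤ b ∧ b ∉ shadow F ∧ Ico x b ⊆ shadow F := by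
    have hbdd : BddBelow (Ici x ∩ (shadow F)ᶜ) := ⟨x, fun z hz => hz.1⟩
    have hmem := (isClosed_Ici.inter hclosed).csInf_mem
      (exists_ge_notMem_shadow hF htop x) hbdd
    exact ⟨_, hmem.1, hmem.2, fun z hz =>
      by_contra fun h => (csInf_le hbdd ⟨hz.1, h⟩).not_gt hz.2⟩
  obtain ⟨a, hax, ha, haxV⟩ : ∃ a, a ≤ x ∧ a ∉ shadow F ∧ Ioc a x ⊆ shadow F := by
    have hne : (Iic x ∩ (shadow F)ᶜ).Nonempty := by
      -- otherwise `F ≤ F b` on `(-∞, x]`, although `F → ∞` at `-∞`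
      by_contra! h
      obtain ⟨y, hFy, hyx⟩ :=
        ((hbot.eventually (eventually_gt_atTop (F b))).and (eventually_le_atBot x)).exists
      refine (le_of_Ico_subset_shadow hF (hyx.trans hxb) (fun z hz => ?_) hb).not_gt hFy
      rcases le_or_gt z x with hzx | hxz
      · by_contra hz'
        exact h.subset ⟨hzx, hz'⟩
      · exact hxbV ⟨hxz.le, hz.2⟩
    have hbdd : BddAbove (Iic x ∩ (shadow F)ᶜ) := ⟨x, fun z hz => hz.1⟩
    have hmem := (isClosed_Iic.inter hclosed).csSup_mem hne hbdd
    exact ⟨_, hmem.1, hmem.2, fun z hz =>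
      by_contra fun h => (le_csSup hbdd ⟨hz.2, h⟩).not_gt hz.1⟩
  refine ⟨a, b, ⟨hax.lt_of_ne ?_, hxb.lt_of_ne ?_⟩, fun z hz => ?_, ha, hb⟩
  · rintro rfl; exact ha hx
  · rintro rfl; exact hb hx
  · rcases le_or_gt z x with hzx | hxz
    · exact haxV ⟨hz.1, hzx⟩
    · exact hxbV ⟨hxz.le, hz.2⟩

theorem eq_of_Ioo_subset_of_endpoints_notMem {V : Set ℝ} {a b a' b' z : ℝ}
    (hsub : Ioo a b ⊆ V) (ha : a ∉ V) (hb : b ∉ V) (hsub' : Ioo a' b' ⊆ V) (ha' : a' ∉ V)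
    (hb' : b' ∉ V) (hz : z ∈ Ioo a b) (hz' : z ∈ Ioo a' b') : a = a' ∧ b = b' := by
  refine ⟨le_antisymm ?_ ?_, le_antisymm ?_ ?_⟩
  · exact not_lt.1 fun h => ha (hsub' ⟨h, hz.1.trans hz'.2⟩)
  · exact not_lt.1 fun h => ha' (hsub ⟨h, hz'.1.trans hz.2⟩)
  · exact not_lt.1 fun h => hb' (hsub ⟨hz.1.trans hz'.2, h⟩)
  · exact not_lt.1 fun h => hb (hsub' ⟨hz'.1.trans hz.2, h⟩)

theorem exists_countable_pairwiseDisjoint_cover_shadow (hF : Continuous F)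
    (htop : Tendsto F atTop atBot) (hbot : Tendsto F atBot atTop) :
    ∃ P : Set (ℝ × ℝ), P.Countable ∧ P.PairwiseDisjoint (fun p => Ioo p.1 p.2) ∧
      shadow F ⊆ ⋃ p ∈ P, Ioo p.1 p.2 ∧ ∀ p ∈ P, p.1 < p.2 ∧ F p.1 ≤ F p.2 := by
  let P := {p : ℝ × ℝ | p.1 < p.2 ∧ Ioo p.1 p.2 ⊆ shadow F ∧ p.1 ∉ shadow F ∧ p.2 ∉ shadow F}
  have hdisj : P.PairwiseDisjoint (fun p => Ioo p.1 p.2) := by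
    rintro ⟨a, b⟩ ⟨-, hsub, ha, hb⟩ ⟨a', b'⟩ ⟨-, hsub', ha', hb'⟩ hne
    refine Set.disjoint_left.2 fun z hz hz' => hne ?_
    obtain ⟨rfl, rfl⟩ := eq_of_Ioo_subset_of_endpoints_notMem hsub ha hb hsub' ha' hb' hz hz'
    rfl
  refine ⟨P, hdisj.countable_of_isOpen (fun _ _ => isOpen_Ioo) fun p hp => nonempty_Ioo.2 hp.1,
    hdisj, fun x hx => ?_, fun p hp => ⟨hp.1, le_of_Ioo_subset_shadow hF hp.1 hp.2.1 hp.2.2.2⟩⟩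
  obtain ⟨a, b, hxab, hsub, ha, hb⟩ := exists_Ioo_subset_shadow hF htop hbot hx
  exact mem_biUnion (x := (a, b)) ⟨hxab.1.trans hxab.2, hsub, ha, hb⟩ hxab

end RisingSun

theorem measure_diff_le_of_le_measure_inter {α : Type*} [MeasurableSpace α] {μ : Measure α}
    {I A : Set α} (hA : MeasurableSet A) (hI : μ I ≠ ∞) {γ : ℝ} (hγ0 : 0 < γ) (hγ1 : γ ≤ 1)
    (h : ENNReal.ofReal γ * μ I ≤ μ (A ∩ I)) :
    μ (I \ A) ≤ ENNReal.ofReal ((1 - γ) / γ) * μ (A ∩ I) := by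
  have hAI : μ (A ∩ I) ≠ ∞ := measure_ne_top_of_subset inter_subset_right hI
  have hsum : μ.real (I \ A) + μ.real (A ∩ I) = μ.real I := by
    rw [inter_comm]; exact measureReal_sdiff_add_inter hA hI
  have hγI : γ * μ.real I ≤ μ.real (A ∩ I) := by
    rw [← ENNReal.toReal_ofReal hγ0.le, measureReal_def, ← ENNReal.toReal_mul]
    exact ENNReal.toReal_mono hAI h
  rw [← ofReal_measureReal (measure_ne_top_of_subset sdiff_subset hI), ← ofReal_measureReal hAI,
    ← ENNReal.ofReal_mul (div_nonneg (sub_nonneg.2 hγ1) hγ0.le)]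
  refine ENNReal.ofReal_le_ofReal ?_
  rw [div_mul_eq_mul_div, le_div_iff₀ hγ0]
  nlinarith

theorem measure_biUnion_diff_le {α ι : Type*} [MeasurableSpace α] {μ : Measure α} {A : Set α}
    (hA : MeasurableSet A) {P : Set ι} (hP : P.Countable) {U : ι → Set α}
    (hd : P.PairwiseDisjoint U) (hU : ∀ i ∈ P, MeasurableSet (U i)) {c : ℝ≥0∞}
    (h : ∀ i ∈ P, μ (U i \ A) ≤ c * μ (A ∩ U i)) :
    μ ((⋃ i ∈ P, U i) \ A) ≤ c * μ A :=
  calc μ ((⋃ i ∈ P, U i) \ A)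
      = μ (⋃ i ∈ P, U i \ A) := by simp_rw [iUnion_sdiff]
    _ ≤ ∑' i : P, μ (U i \ A) := measure_biUnion_le μ hP _
    _ ≤ ∑' i : P, c * μ (A ∩ U i) := ENNReal.tsum_le_tsum fun i => h i i.2
    _ = c * μ (⋃ i ∈ P, A ∩ U i) := by
      rw [ENNReal.tsum_mul_left, measure_biUnion hP (hd.mono fun i => inter_subset_right)
        fun i hi => hA.inter (hU i hi)]
    _ ≤ c * μ A := by gcongr; exact iUnion₂_subset fun i _ => inter_subset_left

def denseRight (A : Set ℝ) (γ : ℝ) : Set ℝ :=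
  {x | ∃ t, x < t ∧ ENNReal.ofReal (γ * (t - x)) < volume (A ∩ Ioo x t)}

section DensityExcess

variable {A : Set ℝ} {γ : ℝ}

noncomputable def densityExcess (A : Set ℝ) (γ x : ℝ) : ℝ :=
  (∫ u in (0)..x, A.indicator 1 u) - γ * x

theorem continuous_densityExcess (hA : MeasurableSet A) (hA_fin : volume A ≠ ∞) :
    Continuous (densityExcess A γ) :=
  (((integrable_indicator_iff hA).2 (integrableOn_const hA_fin)).continuous_primitive 0).sub
    (continuous_const.mul continuous_id)

theorem densityExcess_sub (hA : MeasurableSet A) (hA_fin : volume A ≠ ∞) {x t : ℝ} (hxt : x ≤ t) :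
    densityExcess A γ t - densityExcess A γ x = volume.real (A ∩ Ioc x t) - γ * (t - x) := by
  have hint : Integrable (A.indicator (1 : ℝ → ℝ)) :=
    (integrable_indicator_iff hA).2 (integrableOn_const hA_fin)
  have := intervalIntegral.integral_interval_sub_left (hint.intervalIntegrable (a := 0) (b := t))
    (hint.intervalIntegrable (a := 0) (b := x))
  rw [intervalIntegral.integral_of_le hxt, integral_indicator_one hA,
    measureReal_restrict_apply hA] at this
  simp only [densityExcess]
  linarith

theorem densityExcess_sub_le (hA : MeasurableSet A) (hA_fin : volume A ≠ ∞) {x t : ℝ}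
    (hxt : x ≤ t) :
    densityExcess A γ t - densityExcess A γ x ≤ volume.real A - γ * (t - x) := by
  rw [densityExcess_sub hA hA_fin hxt]
  gcongr
  exact inter_subset_left

theorem tendsto_densityExcess_atTop (hA : MeasurableSet A) (hA_fin : volume A ≠ ∞) (hγ : 0 < γ) :
    Tendsto (densityExcess A γ) atTop atBot := by
  refine tendsto_atBot_mono' atTop ((eventually_ge_atTop 0).mono fun t ht => ?_)
    (tendsto_atBot_add_const_left _ (densityExcess A γ 0 + volume.real A)
      (tendsto_neg_atTop_atBot.comp (tendsto_id.const_mul_atTop hγ)))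
  have := densityExcess_sub_le (γ := γ) hA hA_fin ht
  simp only [Function.comp_apply, id]
  linarith

theorem tendsto_densityExcess_atBot (hA : MeasurableSet A) (hA_fin : volume A ≠ ∞) (hγ : 0 < γ) :
    Tendsto (densityExcess A γ) atBot atTop := by
  refine tendsto_atTop_mono' atBot ((eventually_le_atBot 0).mono fun x hx => ?_)
    (tendsto_atTop_add_const_left _ (densityExcess A γ 0 - volume.real A)
      (tendsto_neg_atBot_atTop.comp (tendsto_id.const_mul_atBot hγ)))
  have := densityExcess_sub_le (γ := γ) hA hA_fin hx
  simp only [Function.comp_apply, id]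
  linarith

theorem denseRight_subset_shadow (hA : MeasurableSet A) (hA_fin : volume A ≠ ∞) (hγ : 0 ≤ γ) :
    denseRight A γ ⊆ shadow (densityExcess A γ) := by
  rintro x ⟨t, hxt, hlt⟩
  refine ⟨t, hxt, ?_⟩
  have : γ * (t - x) < volume.real (A ∩ Ioc x t) :=
    (ENNReal.ofReal_lt_iff_lt_toReal (mul_nonneg hγ (sub_nonneg.2 hxt.le))
      (measure_ne_top_of_subset inter_subset_left hA_fin)).1
      (hlt.trans_le (measure_mono (inter_subset_inter_right _ Ioo_subset_Ioc_self)))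
  linarith [densityExcess_sub (γ := γ) hA hA_fin hxt.le]

theorem volume_denseRight_diff_le (hA : MeasurableSet A) (hγ0 : 0 < γ) (hγ1 : γ < 1) :
    volume (denseRight A γ \ A) ≤ ENNReal.ofReal ((1 - γ) / γ) * volume A := by
  obtain hA_top | hA_fin := eq_or_ne (volume A) ∞
  · rw [hA_top, ENNReal.mul_top (by simpa using div_pos (sub_pos.2 hγ1) hγ0)]
    exact le_top
  obtain ⟨P, hPc, hPd, hcover, hPF⟩ := exists_countable_pairwiseDisjoint_cover_shadow
    (continuous_densityExcess hA hA_fin) (tendsto_densityExcess_atTop hA hA_fin hγ0)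
    (tendsto_densityExcess_atBot hA hA_fin hγ0)
  refine (measure_mono (sdiff_subset_sdiff_left
    ((denseRight_subset_shadow hA hA_fin hγ0.le).trans hcover))).trans
    (measure_biUnion_diff_le hA hPc hPd (fun _ _ => measurableSet_Ioo) fun p hp => ?_)
  obtain ⟨hab, hFab⟩ := hPF p hp
  refine measure_diff_le_of_le_measure_inter hA (by simp [Real.volume_Ioo]) hγ0 hγ1.le ?_
  rw [Real.volume_Ioo, ← ENNReal.ofReal_mul hγ0.le,
    measure_congr ((ae_eq_refl A).inter Ioo_ae_eq_Ioc)]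
  refine ENNReal.ofReal_le_of_le_toReal ?_
  linarith [densityExcess_sub (γ := γ) hA hA_fin hab.le, measureReal_def volume (A ∩ Ioc p.1 p.2)]

end DensityExcess

def denseLeft (A : Set ℝ) (γ : ℝ) : Set ℝ :=
  {x | ∃ s, s < x ∧ ENNReal.ofReal (γ * (x - s)) < volume (A ∩ Ioo s x)}

theorem denseLeft_eq_neg_denseRight (A : Set ℝ) (γ : ℝ) :
    denseLeft A γ = -denseRight (-A) γ := by
  have hvol (s x : ℝ) : volume (-A ∩ Ioo (-x) (-s)) = volume (A ∩ Ioo s x) := by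
    rw [← neg_Ioo, ← inter_neg, Measure.measure_neg]
  ext x
  simp only [denseLeft, denseRight, Set.mem_neg, mem_ofPred_eq]
  constructor
  · rintro ⟨s, hsx, h⟩
    refine ⟨-s, neg_lt_neg hsx, ?_⟩
    rwa [hvol, neg_sub_neg]
  · rintro ⟨t, hxt, h⟩
    refine ⟨-t, neg_lt.1 hxt, ?_⟩
    rw [← neg_neg t, hvol, neg_neg] at h
    rwa [sub_neg_eq_add, add_comm, ← sub_neg_eq_add]

theorem volume_denseLeft_diff_le {A : Set ℝ} (hA : MeasurableSet A) {γ : ℝ} (hγ0 : 0 < γ)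
    (hγ1 : γ < 1) : volume (denseLeft A γ \ A) ≤ ENNReal.ofReal ((1 - γ) / γ) * volume A := by
  have : denseLeft A γ \ A = -(denseRight (-A) γ \ -A) := by
    rw [denseLeft_eq_neg_denseRight]; ext; simp
  rw [this, Measure.measure_neg, ← Measure.measure_neg volume A]
  exact volume_denseRight_diff_le hA.neg hγ0 hγ1

/-- The uncentred Hardy–Littlewood maximal function on `ℝ`. -/
noncomputable def hlMax (h : ℝ → ℝ≥0∞) (y : ℝ) : ℝ≥0∞ :=
  ⨆ (s : ℝ) (t : ℝ) (_ : s < y) (_ : y < t), (∫⁻ u in Ioo s t, h u) / ENNReal.ofReal (t - s)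

theorem lt_hlMax_iff {h : ℝ → ℝ≥0∞} {y : ℝ} {c : ℝ≥0∞} :
    c < hlMax h y ↔
      ∃ s t, s < y ∧ y < t ∧ c * ENNReal.ofReal (t - s) < ∫⁻ u in Ioo s t, h u := by
  simp only [hlMax, lt_iSup_iff, exists_prop]
  refine exists₂_congr fun s t => and_congr_right fun hs => and_congr_right fun ht =>
    ENNReal.lt_div_iff_mul_lt (Or.inl ?_) (Or.inl ENNReal.ofReal_ne_top)
  simpa using hs.trans ht

theorem setLIntegral_indicator_one {A : Set ℝ} (hA : MeasurableSet A) (I : Set ℝ) :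
    ∫⁻ u in I, A.indicator 1 u = volume (A ∩ I) := by
  rw [lintegral_indicator_one hA, Measure.restrict_apply hA]

theorem superlevel_hlMax_indicator_subset {A : Set ℝ} (hA : MeasurableSet A) {γ : ℝ}
    (hγ : 0 ≤ γ) :
    {y | ENNReal.ofReal γ < hlMax (A.indicator 1) y} ⊆ A ∪ denseRight A γ ∪ denseLeft A γ := by
  intro y hy
  by_cases hyA : y ∈ A
  · exact Or.inl (Or.inl hyA)
  obtain ⟨s, t, hsy, hyt, hlt⟩ := lt_hlMax_iff.1 hy
  rw [setLIntegral_indicator_one hA] at hlt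
  by_contra! hy'
  simp only [mem_union, denseRight, denseLeft, mem_ofPred_eq, not_or, not_exists, not_and,
    not_lt] at hy'
  have hsplit : A ∩ Ioo s t ⊆ (A ∩ Ioo s y) ∪ (A ∩ Ioo y t) := by
    rintro u ⟨huA, hsu, hut⟩
    rcases lt_trichotomy u y with huy | rfl | hyu
    · exact Or.inl ⟨huA, hsu, huy⟩
    · exact absurd huA hyA
    · exact Or.inr ⟨huA, hyu, hut⟩
  refine hlt.not_ge ?_
  calc volume (A ∩ Ioo s t)
      ≤ volume (A ∩ Ioo s y) + volume (A ∩ Ioo y t) :=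
        (measure_mono hsplit).trans (measure_union_le _ _)
    _ ≤ ENNReal.ofReal (γ * (y - s)) + ENNReal.ofReal (γ * (t - y)) :=
      add_le_add (hy'.2 s hsy) (hy'.1.2 t hyt)
    _ = ENNReal.ofReal γ * ENNReal.ofReal (t - s) := by
      rw [← ENNReal.ofReal_add (by nlinarith) (by nlinarith), ← ENNReal.ofReal_mul hγ]
      ring_nf

theorem volume_superlevel_hlMax_indicator_le {A : Set ℝ} (hA : MeasurableSet A) {β : ℝ}
    (hβ0 : 0 < β) (hβ1 : β < 1) :
    volume {y | ENNReal.ofReal (1 - β) < hlMax (A.indicator 1) y}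
      ≤ ENNReal.ofReal ((1 + β) / (1 - β)) * volume A := by
  have hγ0 : 0 < 1 - β := sub_pos.2 hβ1
  have hγ1 : 1 - β < 1 := sub_lt_self 1 hβ0
  have hR := volume_denseRight_diff_le hA hγ0 hγ1
  have hL := volume_denseLeft_diff_le hA hγ0 hγ1
  rw [sub_sub_cancel] at hR hL
  have hc : ENNReal.ofReal ((1 + β) / (1 - β))
      = 1 + ENNReal.ofReal (β / (1 - β)) + ENNReal.ofReal (β / (1 - β)) := by
    have hβ' : 0 ≤ β / (1 - β) := by positivity
    rw [← ENNReal.ofReal_one, ← ENNReal.ofReal_add zero_le_one hβ',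
      ← ENNReal.ofReal_add (by positivity) hβ']
    congr 1
    field_simp
    ring
  have hsub : {y | ENNReal.ofReal (1 - β) < hlMax (A.indicator 1) y}
      ⊆ A ∪ (denseRight A (1 - β) \ A) ∪ (denseLeft A (1 - β) \ A) := by
    refine (superlevel_hlMax_indicator_subset hA hγ0.le).trans ?_
    rintro y ((hy | hy) | hy) <;> by_cases hyA : y ∈ A <;> simp_all
  calc volume {y | ENNReal.ofReal (1 - β) < hlMax (A.indicator 1) y}
      ≤ volume A + volume (denseRight A (1 - β) \ A) + volume (denseLeft A (1 - β) \ A) :=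
        (measure_mono hsub).trans <|
          (measure_union_le _ _).trans (add_le_add_left (measure_union_le _ _) _)
    _ ≤ volume A + ENNReal.ofReal (β / (1 - β)) * volume A
          + ENNReal.ofReal (β / (1 - β)) * volume A := by gcongr
    _ = ENNReal.ofReal ((1 + β) / (1 - β)) * volume A := by rw [hc]; ring

theorem hlMax_eq_iSup_rat (h : ℝ → ℝ≥0∞) (y : ℝ) :
    hlMax h y = ⨆ (q : ℚ) (r : ℚ) (_ : (q : ℝ) < y) (_ : y < (r : ℝ)),
      (∫⁻ u in Ioo (q : ℝ) r, h u) / ENNReal.ofReal (r - q) := by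
  refine le_antisymm (iSup₂_le fun s t => iSup₂_le fun hs ht => le_of_forall_lt fun c hc => ?_)
    (iSup₂_le fun q r => iSup₂_le fun hq hr => le_iSup₂_of_le (q : ℝ) (r : ℝ)
      (le_iSup₂_of_le hq hr le_rfl))
  have hst : c * ENNReal.ofReal (t - s) < ∫⁻ u in Ioo s t, h u :=
    (ENNReal.lt_div_iff_mul_lt (Or.inl (by simpa using hs.trans ht))
      (Or.inl ENNReal.ofReal_ne_top)).1 hc
  -- enlarging `(s, t)` to `(q, r)` with rational endpoints only increases the integral
  have hcont : Continuous fun δ : ℝ => c * ENNReal.ofReal (t - s + 2 * δ) :=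
    (ENNReal.continuous_const_mul hc.ne_top).comp (ENNReal.continuous_ofReal.comp (by fun_prop))
  obtain ⟨δ, hδ0, hδ⟩ := ((hcont.tendsto' 0 _ (by simp)).eventually (gt_mem_nhds hst)).exists_gt
  obtain ⟨q, hq1, hq2⟩ := exists_rat_btwn (sub_lt_self s hδ0)
  obtain ⟨r, hr1, hr2⟩ := exists_rat_btwn (lt_add_of_pos_right t hδ0)
  have hqy : (q : ℝ) < y := hq2.trans hs
  have hyr : y < (r : ℝ) := ht.trans hr1
  refine lt_of_lt_of_le ?_ (le_iSup₂_of_le q r (le_iSup₂_of_le hqy hyr le_rfl))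
  refine (ENNReal.lt_div_iff_mul_lt (Or.inl (by simpa using hqy.trans hyr))
    (Or.inl ENNReal.ofReal_ne_top)).2 ?_
  calc c * ENNReal.ofReal (r - q) ≤ c * ENNReal.ofReal (t - s + 2 * δ) := by
        gcongr; linarith
    _ < ∫⁻ u in Ioo s t, h u := hδ
    _ ≤ ∫⁻ u in Ioo (q : ℝ) r, h u := lintegral_mono_set (Ioo_subset_Ioo hq2.le hr1.le)

theorem hlMax_le_one {h : ℝ → ℝ≥0∞} (h1 : ∀ u, h u ≤ 1) (y : ℝ) : hlMax h y ≤ 1 :=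
  iSup₂_le fun s t => iSup₂_le fun _ _ => ENNReal.div_le_of_le_mul <|
    calc ∫⁻ u in Ioo s t, h u ≤ ∫⁻ _ in Ioo s t, 1 := lintegral_mono h1
      _ = 1 * ENNReal.ofReal (t - s) := by simp [Real.volume_Ioo]

theorem lt_hlMax_indicator_of_lt_hlMax {h : ℝ → ℝ≥0∞} (hh : Measurable h) (h1 : ∀ u, h u ≤ 1)
    {β ε : ℝ} (hβ : β ≤ 1) (hε0 : 0 < ε) (hε1 : ε ≤ 1) {y : ℝ}
    (hy : ENNReal.ofReal (1 - β * ε) < hlMax h y) :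
    ENNReal.ofReal (1 - β) < hlMax ({u | ENNReal.ofReal (1 - ε) < h u}.indicator 1) y := by
  set B := {u | ENNReal.ofReal (1 - ε) < h u}
  have hB : MeasurableSet B := measurableSet_lt measurable_const hh
  obtain ⟨s, t, hs, ht, hlt⟩ := lt_hlMax_iff.1 hy
  refine lt_hlMax_iff.2 ⟨s, t, hs, ht, ?_⟩
  rw [setLIntegral_indicator_one hB]
  have hpt (u : ℝ) : h u ≤ ENNReal.ofReal (1 - ε) + B.indicator (fun _ => ENNReal.ofReal ε) u := by
    by_cases hu : u ∈ B
    · rw [indicator_of_mem hu, ← ENNReal.ofReal_add (by linarith) hε0.le, sub_add_cancel,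
        ENNReal.ofReal_one]
      exact h1 u
    · rw [indicator_of_notMem hu, add_zero]
      exact not_lt.1 hu
  have hint : ∫⁻ u in Ioo s t, h u
      ≤ ENNReal.ofReal (1 - ε) * ENNReal.ofReal (t - s) + ENNReal.ofReal ε * volume (B ∩ Ioo s t) :=
    calc ∫⁻ u in Ioo s t, h u
        ≤ ∫⁻ u in Ioo s t, (ENNReal.ofReal (1 - ε) + B.indicator (fun _ => ENNReal.ofReal ε) u) :=
          lintegral_mono hpt
      _ = _ := by
          rw [lintegral_add_left measurable_const, setLIntegral_const, Real.volume_Ioo,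
            lintegral_indicator_const hB, Measure.restrict_apply hB]
  have hsplit : ENNReal.ofReal (1 - β * ε)
      = ENNReal.ofReal (1 - ε) + ENNReal.ofReal ε * ENNReal.ofReal (1 - β) := by
    rw [← ENNReal.ofReal_mul hε0.le, ← ENNReal.ofReal_add (by linarith) (by nlinarith)]
    ring_nf
  rw [hsplit, add_mul, mul_assoc] at hlt
  have := (ENNReal.add_lt_add_iff_left (by finiteness)).1 (hlt.trans_le hint)
  exact (ENNReal.mul_lt_mul_iff_right (by simpa using hε0) ENNReal.ofReal_ne_top).1 this

theorem measure_le_of_forall_slice_le {ι : Type*} [Fintype ι] [DecidableEq ι] {X : ι → Type*}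
    [∀ i, MeasurableSpace (X i)] {μ : ∀ i, Measure (X i)} [∀ i, SigmaFinite (μ i)]
    {S B : Set (∀ i, X i)} (hS : MeasurableSet S) (hB : MeasurableSet B) (j : ι) {c : ℝ≥0∞}
    (h : ∀ x, μ j {u | Function.update x j u ∈ S} ≤ c * μ j {u | Function.update x j u ∈ B}) :
    Measure.pi μ S ≤ c * Measure.pi μ B := by
  have hslice (x : ∀ i, X i) {T : Set (∀ i, X i)} (hT : MeasurableSet T) :
      ∫⁻ u, T.indicator 1 (Function.update x j u) ∂μ j = μ j {u | Function.update x j u ∈ T} :=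
    lintegral_indicator_one (measurable_update x hT)
  rw [← lintegral_indicator_one hS, ← lintegral_indicator_one hB,
    ← lintegral_const_mul c (measurable_one.indicator hB)]
  refine lintegral_le_of_lmarginal_le {j} (measurable_one.indicator hS)
    ((measurable_one.indicator hB).const_mul c) fun x => ?_
  simp only [lmarginal_singleton]
  rw [lintegral_const_mul c (f := fun u => B.indicator 1 (Function.update x j u))
      ((measurable_one.indicator hB).comp (measurable_update x)),
    hslice x hS, hslice x hB]
  exact h x

section Directional

variable {n : ℕ}

theorem dirMax_eq_hlMax (j : Fin n) (f : (Fin n → ℝ) → ℝ≥0∞) (x : Fin n → ℝ) :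
    dirMax j f x = hlMax (fun u => f (Function.update x j u)) (x j) := rfl

theorem measurable_dirMax (j : Fin n) {f : (Fin n → ℝ) → ℝ≥0∞} (hf : Measurable f) :
    Measurable (dirMax j f) := by
  classical
  have hrat : dirMax j f = fun x => ⨆ (q : ℚ) (r : ℚ),
      if (q : ℝ) < x j ∧ x j < (r : ℝ) then
        (∫⁻ u in Ioo (q : ℝ) r, f (Function.update x j u)) / ENNReal.ofReal (r - q)
      else 0 := by
    ext x
    rw [dirMax_eq_hlMax, hlMax_eq_iSup_rat]
    refine iSup_congr fun q => iSup_congr fun r => ?_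
    rw [iSup_and', iSup_eq_if]
    rfl
  rw [hrat]
  refine .iSup fun q => .iSup fun r => Measurable.ite ?_ ?_ measurable_const
  · exact (measurableSet_lt measurable_const (measurable_pi_apply j)).inter
      (measurableSet_lt (measurable_pi_apply j) measurable_const)
  · exact ((hf.comp measurable_update').lintegral_prod_right').div_const _

theorem measurable_foldr_dirMax (L : List (Fin n)) {f : (Fin n → ℝ) → ℝ≥0∞}
    (hf : Measurable f) : Measurable (L.foldr (fun j g => dirMax j g) f) := by
  induction L with
  | nil => exact hf
  | cons j L ih => exact measurable_dirMax j ih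

theorem foldr_dirMax_le_one (L : List (Fin n)) {f : (Fin n → ℝ) → ℝ≥0∞} (hf : ∀ x, f x ≤ 1)
    (x : Fin n → ℝ) : L.foldr (fun j g => dirMax j g) f x ≤ 1 := by
  induction L generalizing x with
  | nil => exact hf x
  | cons j L ih => exact hlMax_le_one (fun u => ih _) _

theorem volume_superlevel_dirMax_indicator_le (j : Fin n) {B : Set (Fin n → ℝ)}
    (hB : MeasurableSet B) {β : ℝ} (hβ0 : 0 < β) (hβ1 : β < 1) :
    volume {x | ENNReal.ofReal (1 - β) < dirMax j (B.indicator 1) x}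
      ≤ ENNReal.ofReal ((1 + β) / (1 - β)) * volume B := by
  refine measure_le_of_forall_slice_le
    (measurableSet_lt measurable_const (measurable_dirMax j (measurable_one.indicator hB))) hB j
    fun x => le_of_eq_of_le ?_
      (volume_superlevel_hlMax_indicator_le (measurable_update x hB) hβ0 hβ1)
  congr 1
  ext u
  simp only [mem_ofPred_eq, dirMax_eq_hlMax, Function.update_idem, Function.update_self]
  rfl

theorem volume_superlevel_foldr_dirMax_le {B : Set (Fin n → ℝ)} (hB : MeasurableSet B) {β : ℝ}
    (hβ0 : 0 < β) (hβ1 : β < 1) (L : List (Fin n)) :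
    volume {x | ENNReal.ofReal (1 - β ^ L.length)
        < L.foldr (fun j g => dirMax j g) (B.indicator 1) x}
      ≤ ENNReal.ofReal (((1 + β) / (1 - β)) ^ L.length) * volume B := by
  induction L with
  | nil =>
    simp only [List.length_nil, pow_zero, sub_self, ENNReal.ofReal_zero, ENNReal.ofReal_one,
      one_mul, List.foldr_nil]
    refine measure_mono fun x hx => ?_
    by_contra hxB
    simp [hxB] at hx
  | cons j L ih =>
    set g := L.foldr (fun j g => dirMax j g) (B.indicator 1)
    have hg : Measurable g := measurable_foldr_dirMax L (measurable_one.indicator hB)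
    have hg1 : ∀ x, g x ≤ 1 := foldr_dirMax_le_one L (fun x => by
      by_cases hx : x ∈ B <;> simp [hx])
    calc volume {x | ENNReal.ofReal (1 - β ^ (j :: L).length) < dirMax j g x}
        ≤ volume {x | ENNReal.ofReal (1 - β) <
            dirMax j ({y | ENNReal.ofReal (1 - β ^ L.length) < g y}.indicator 1) x} :=
          measure_mono fun x hx => lt_hlMax_indicator_of_lt_hlMax
            (hg.comp (measurable_update x)) (fun u => hg1 _) hβ1.le (pow_pos hβ0 _)
            (pow_le_one₀ hβ0.le hβ1.le) (by rwa [List.length_cons, pow_succ'] at hx)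
      _ ≤ ENNReal.ofReal ((1 + β) / (1 - β)) *
            volume {y | ENNReal.ofReal (1 - β ^ L.length) < g y} :=
          volume_superlevel_dirMax_indicator_le j (measurableSet_lt measurable_const hg) hβ0 hβ1
      _ ≤ ENNReal.ofReal ((1 + β) / (1 - β)) *
            (ENNReal.ofReal (((1 + β) / (1 - β)) ^ L.length) * volume B) := by gcongr
      _ = ENNReal.ofReal (((1 + β) / (1 - β)) ^ (j :: L).length) * volume B := by
          have : 0 ≤ (1 + β) / (1 - β) := div_nonneg (by linarith) (by linarith)
          rw [← mul_assoc, ← ENNReal.ofReal_mul this, List.length_cons, pow_succ']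

end Directional

theorem iterated_solyanik (n : ℕ) (hn : 1 ≤ n) (α : ℝ) (hα0 : 0 < α) (hα1 : α < 1)
    (E : Set (Fin n → ℝ)) (hE : MeasurableSet E) :
    volume {x : Fin n → ℝ | iterMax n (E.indicator 1) x > ENNReal.ofReal α}
      ≤ ENNReal.ofReal
          ((1 + 4 * (1 - α) ^ ((n : ℝ)⁻¹) / (1 - (1 - α) ^ ((n : ℝ)⁻¹))) ^ n)
        * volume E := by
  have h1α : 0 < 1 - α := sub_pos.2 hα1
  set β := (1 - α) ^ ((n : ℝ)⁻¹)
  have hβ0 : 0 < β := Real.rpow_pos_of_pos h1α _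
  have hβ1 : β < 1 := Real.rpow_lt_one h1α.le (sub_lt_self 1 hα0) (by positivity)
  have hβn : β ^ n = 1 - α := by
    rw [← Real.rpow_natCast, ← Real.rpow_mul h1α.le, inv_mul_cancel₀ (by positivity),
      Real.rpow_one]
  have key := volume_superlevel_foldr_dirMax_le hE hβ0 hβ1 (List.finRange n)
  rw [List.length_finRange, hβn, sub_sub_cancel] at key
  refine key.trans (mul_le_mul_left (ENNReal.ofReal_le_ofReal ?_) _)
  have h4 : 1 + 4 * β / (1 - β) = (1 + 3 * β) / (1 - β) := by
    field_simp [(sub_pos.2 hβ1).ne']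
    ring
  rw [h4]
  gcongr ?_ ^ n
  exact div_le_div_of_nonneg_right (by linarith) (sub_pos.2 hβ1).le
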